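/- Every inner amenable commutative transitive group is amenable. -/

import Mathlib

/-- A finitely additive probability measure defined on all subsets of `X`. -/
def IsFAPMeasure {X : Type*} (μ : Set X → ℝ) : Prop :=
  μ Set.univ = 1 ∧ (∀ A : Set X, 0 ≤ μ A) ∧
    ∀ A B : Set X, Disjoint A B → μ (A ∪ B) = μ A + μ B

/-- A group is amenable if its left translation action on itself admits an
invariant finitely additive probability measure. -/
def AmenableGroup (G : Type*) [Group G] : Prop :=
  ∃ μ : Set G → ℝ, IsFAPMeasure μ ∧ ∀ (g : G) (A : Set G), μ ((g * ·) '' A) = μ A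

/-- Conjugation by `g` as a map on the non-identity elements of `G`. -/
def conjNonId {G : Type*} [Group G] (g : G) (x : {h : G // h ≠ 1}) : {h : G // h ≠ 1} :=
  ⟨g * x.1 * g⁻¹, fun hx => x.2 (by
    have h1 : x.1 = g⁻¹ * (g * x.1 * g⁻¹) * g := by group
    rw [h1, hx]; group)⟩

/-- A group is inner amenable if the conjugation action on its set of
non-identity elements admits an invariant finitely additive probability
measure. -/
def InnerAmenable (G : Type*) [Group G] : Prop :=
  ∃ μ : Set {h : G // h ≠ 1} → ℝ, IsFAPMeasure μ ∧
    ∀ (g : G) (A : Set {h : G // h ≠ 1}), μ (conjNonId g '' A) = μ A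

/-!
For a non-identity `x`, the stabilizer of `x` under conjugation is its centralizer, abelian by
commutative transitivity and therefore amenable: the averages of translates along
`1, a, …, a^(N-1)`, iterated over finitely many elements, are almost invariant under each of them,
and an ultrafilter limit of these averages is an invariant mean.

A group `G` acting on a set `X` with a `G`-invariant mean `m` and amenable stabilizers is amenable:
fix a representative `y` of each orbit, an invariant mean `μ_y` on its stabilizer and `t x` with
`t x • y = x`; then `B ↦ ∫ μ_y ((t x)⁻¹ B) dm(x)` is a left-invariant mean on `G`. Here the
integral against the finitely additive `m` is an ultrafilter limit of lower sums.
-/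

open Filter Topology Finset

namespace IsFAPMeasure

variable {X : Type*} {m : Set X → ℝ}

theorem nonneg (hm : IsFAPMeasure m) (A : Set X) : 0 ≤ m A := hm.2.1 A

theorem union (hm : IsFAPMeasure m) {A B : Set X} (h : Disjoint A B) :
    m (A ∪ B) = m A + m B :=
  hm.2.2 A B h

theorem empty (hm : IsFAPMeasure m) : m ∅ = 0 := by
  simpa using hm.union (Set.disjoint_empty (∅ : Set X))

theorem le_one (hm : IsFAPMeasure m) (A : Set X) : m A ≤ 1 := by
  have h := hm.union (disjoint_compl_right (a := A))
  rw [Set.union_compl_self, hm.1] at h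
  linarith [hm.nonneg Aᶜ]

theorem sum_inter_preimage {ι : Type*} [DecidableEq ι] (hm : IsFAPMeasure m) (A : Set X)
    (φ : X → ι) (s : Finset ι) :
    ∑ i ∈ s, m (A ∩ φ ⁻¹' {i}) = m (A ∩ φ ⁻¹' s) := by
  induction s using Finset.induction_on with
  | empty => simp [hm.empty]
  | insert a s ha ih =>
    rw [sum_insert ha, ih, coe_insert, Set.insert_eq, Set.preimage_union,
      Set.inter_union_distrib_left, hm.union]
    exact ((Set.disjoint_singleton_left.2 (mod_cast ha)).preimage φ).mono
      Set.inter_subset_right Set.inter_subset_right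

theorem map (hm : IsFAPMeasure m) {Y : Type*} (φ : X → Y) :
    IsFAPMeasure fun B => m (φ ⁻¹' B) :=
  ⟨hm.1, fun _ => hm.nonneg _, fun _ _ h => hm.union (h.preimage φ)⟩

theorem dirac (x : X) : IsFAPMeasure fun A : Set X => A.indicator 1 x := by
  refine ⟨by simp, fun A => Set.indicator_nonneg (fun _ _ => zero_le_one) x, fun A B h => ?_⟩
  change (A ∪ B).indicator 1 x = _
  rw [Set.indicator_union_of_disjoint h]

theorem of_tendsto {ι : Type*} {l : Filter ι} [l.NeBot] {μ : ι → Set X → ℝ}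
    (hμ : ∀ᶠ i in l, IsFAPMeasure (μ i)) (hm : ∀ A, Tendsto (fun i => μ i A) l (𝓝 (m A))) :
    IsFAPMeasure m := by
  refine ⟨tendsto_nhds_unique (hm _) (tendsto_const_nhds.congr' (hμ.mono fun i hi => hi.1.symm)),
    fun A => ge_of_tendsto (hm A) (hμ.mono fun i hi => hi.nonneg A), fun A B h => ?_⟩
  exact tendsto_nhds_unique (hm _)
    (((hm A).add (hm B)).congr' (hμ.mono fun i hi => (hi.union h).symm))

end IsFAPMeasure

theorem Ultrafilter.tendsto_limUnder_of_eventually_mem_Icc {ι : Type*} (U : Ultrafilter ι)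
    {u : ι → ℝ} {a b : ℝ} (h : ∀ᶠ i in U, u i ∈ Set.Icc a b) :
    Tendsto u U (𝓝 (limUnder (U : Filter ι) u)) := by
  obtain ⟨x, -, hx⟩ := isCompact_Icc.ultrafilter_le_nhds (U.map u) (le_principal_iff.2 h)
  exact tendsto_nhds_limUnder ⟨x, hx⟩

theorem eq_of_tendsto_of_abs_sub_le {ι : Type*} {l : Filter ι} [l.NeBot] {u v ε : ι → ℝ}
    {x y : ℝ} (hu : Tendsto u l (𝓝 x)) (hv : Tendsto v l (𝓝 y)) (hε : Tendsto ε l (𝓝 0))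
    (h : ∀ᶠ i in l, |u i - v i| ≤ ε i) : x = y := by
  have h0 : Tendsto (fun i => u i - v i) l (𝓝 0) := squeeze_zero_norm' h hε
  linarith [tendsto_nhds_unique (hu.sub hv) h0]

section TranslateAverage

variable {H : Type*} [Group H]

noncomputable def translateAverage (a : H) (N : ℕ) (μ : Set H → ℝ) (A : Set H) : ℝ :=
  (∑ j ∈ range N, μ ((a ^ j * ·) ⁻¹' A)) / N

theorem isFAPMeasure_translateAverage {μ : Set H → ℝ} (hμ : IsFAPMeasure μ) (a : H) {N : ℕ}
    (hN : 0 < N) : IsFAPMeasure (translateAverage a N μ) := by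
  refine ⟨?_, fun A => div_nonneg (sum_nonneg fun j _ => hμ.nonneg _) N.cast_nonneg,
    fun A B h => ?_⟩
  · simp [translateAverage, hμ.1, hN.ne']
  · simp only [translateAverage, Set.preimage_union, ← add_div, ← sum_add_distrib]
    congr 1
    exact sum_congr rfl fun j _ => hμ.union (h.preimage _)

theorem abs_translateAverage_preimage_self_sub_le {μ : Set H → ℝ} (hμ : IsFAPMeasure μ)
    (a : H) (N : ℕ) (A : Set H) :
    |translateAverage a N μ ((a * ·) ⁻¹' A) - translateAverage a N μ A| ≤ 1 / N := by
  have htelescope : ∑ j ∈ range N, μ ((a ^ j * ·) ⁻¹' ((a * ·) ⁻¹' A))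
      - ∑ j ∈ range N, μ ((a ^ j * ·) ⁻¹' A) = μ ((a ^ N * ·) ⁻¹' A) - μ A := by
    simp only [← sum_sub_distrib, Set.preimage_preimage, ← mul_assoc, ← pow_succ']
    simpa using sum_range_sub (fun j => μ ((a ^ j * ·) ⁻¹' A)) N
  rw [translateAverage, translateAverage, ← sub_div, htelescope, abs_div, Nat.abs_cast]
  gcongr
  rw [abs_le]
  constructor <;> linarith [hμ.nonneg A, hμ.le_one A, hμ.nonneg ((a ^ N * ·) ⁻¹' A),
    hμ.le_one ((a ^ N * ·) ⁻¹' A)]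

theorem abs_translateAverage_preimage_sub_le {H : Type*} [CommGroup H] {μ : Set H → ℝ} {b : H}
    {δ : ℝ} (h : ∀ B, |μ ((b * ·) ⁻¹' B) - μ B| ≤ δ) (a : H) (N : ℕ) (A : Set H) :
    |translateAverage a N μ ((b * ·) ⁻¹' A) - translateAverage a N μ A| ≤ δ := by
  have hδ : 0 ≤ δ := (abs_nonneg _).trans (h ∅)
  rw [translateAverage, translateAverage, ← sub_div, ← sum_sub_distrib, abs_div, Nat.abs_cast]
  refine div_le_of_le_mul₀ N.cast_nonneg hδ ?_
  calc |∑ j ∈ range N, (μ ((a ^ j * ·) ⁻¹' ((b * ·) ⁻¹' A)) - μ ((a ^ j * ·) ⁻¹' A))|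
      ≤ ∑ j ∈ range N, |μ ((b * ·) ⁻¹' ((a ^ j * ·) ⁻¹' A)) - μ ((a ^ j * ·) ⁻¹' A)| := by
        simp only [Set.preimage_preimage, mul_left_comm b]
        exact abs_sum_le_sum_abs _ _
    _ ≤ δ * N := by simpa [mul_comm] using sum_le_sum fun j (_ : j ∈ range N) => h _

noncomputable def translateAverages (L : List H) (N : ℕ) : Set H → ℝ :=
  L.foldr (fun a μ => translateAverage a N μ) fun A => A.indicator 1 1

theorem isFAPMeasure_translateAverages (L : List H) {N : ℕ} (hN : 0 < N) :
    IsFAPMeasure (translateAverages L N) := by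
  induction L with
  | nil => exact IsFAPMeasure.dirac 1
  | cons a L ih => exact isFAPMeasure_translateAverage ih a hN

theorem abs_translateAverages_preimage_sub_le {H : Type*} [CommGroup H] {L : List H} {a : H}
    (ha : a ∈ L) {N : ℕ} (hN : 0 < N) (A : Set H) :
    |translateAverages L N ((a * ·) ⁻¹' A) - translateAverages L N A| ≤ 1 / N := by
  induction L generalizing A with
  | nil => simp at ha
  | cons c L ih =>
    rcases List.mem_cons.1 ha with rfl | ha
    · exact abs_translateAverage_preimage_self_sub_le (isFAPMeasure_translateAverages L hN) _ _ _
    · exact abs_translateAverage_preimage_sub_le (ih ha) _ _ _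

end TranslateAverage

theorem CommGroup.amenableGroup (H : Type*) [CommGroup H] : AmenableGroup H := by
  classical
  set U := Ultrafilter.of (atTop : Filter (Finset H × ℕ))
  have hU : (U : Filter (Finset H × ℕ)) ≤ atTop := Ultrafilter.of_le _
  set μ : Finset H × ℕ → Set H → ℝ := fun i => translateAverages i.1.toList i.2
  have hfap : ∀ᶠ i in (U : Filter (Finset H × ℕ)), IsFAPMeasure (μ i) :=
    ((eventually_ge_atTop (∅, 1)).filter_mono hU).mono fun i hi =>
      isFAPMeasure_translateAverages _ hi.2
  have hlim (A : Set H) : Tendsto (μ · A) U (𝓝 (limUnder (U : Filter (Finset H × ℕ)) (μ · A))) :=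
    U.tendsto_limUnder_of_eventually_mem_Icc (hfap.mono fun i hi => ⟨hi.nonneg A, hi.le_one A⟩)
  refine ⟨fun A => limUnder (U : Filter (Finset H × ℕ)) (μ · A), .of_tendsto hfap hlim,
    fun g A => ?_⟩
  have hsnd : Tendsto Prod.snd (atTop : Filter (Finset H × ℕ)) atTop :=
    prod_atTop_atTop_eq (α := Finset H) (β := ℕ) ▸ tendsto_snd
  have hε : Tendsto (fun i : Finset H × ℕ => 1 / (i.2 : ℝ)) U (𝓝 0) :=
    (tendsto_one_div_atTop_nhds_zero_nat.comp hsnd).mono_left hU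
  refine eq_of_tendsto_of_abs_sub_le (hlim _) (hlim A) hε ?_
  filter_upwards [hU (eventually_ge_atTop ({g}, 1))] with i hi
  have hg : g ∈ i.1.toList := mem_toList.2 (hi.1 (mem_singleton_self g))
  have h := abs_translateAverages_preimage_sub_le hg hi.2 ((g * ·) '' A)
  rwa [Set.preimage_image_eq _ (mul_right_injective g), abs_sub_comm] at h

section FAIntegral

variable {X : Type*} {m : Set X → ℝ}

-- The layer-cake sum `∫ u dm` of a function `u : X → ℕ` bounded by `n`.
noncomputable def levelSum (m : Set X → ℝ) (n : ℕ) (u : X → ℕ) : ℝ :=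
  ∑ k ∈ range n, m {x | k < u x}

theorem levelSum_add_indicator (hm : IsFAPMeasure m) {n : ℕ} {w : X → ℕ} {E : Set X}
    (hE : ∀ x ∈ E, w x < n) : levelSum m n (w + E.indicator 1) = levelSum m n w + m E := by
  classical
  have hsplit (k : ℕ) :
      {x | k < (w + E.indicator (1 : X → ℕ)) x} = {x | k < w x} ∪ (E ∩ w ⁻¹' {k}) := by
    ext x
    by_cases hx : x ∈ E <;> simp [hx]
    omega
  have hdisj (k : ℕ) : Disjoint {x | k < w x} (E ∩ w ⁻¹' {k}) :=
    Set.disjoint_left.2 fun x hk hx => (ne_of_lt hk).symm hx.2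
  have hE' : E ∩ w ⁻¹' (range n : Set ℕ) = E :=
    Set.inter_eq_left.2 fun x hx => by simpa using hE x hx
  simp only [levelSum, hsplit, hm.union (hdisj _), sum_add_distrib, hm.sum_inter_preimage, hE']

theorem levelSum_add (hm : IsFAPMeasure m) {n : ℕ} {u v : X → ℕ} (h : ∀ x, u x + v x ≤ n) :
    levelSum m n (u + v) = levelSum m n u + levelSum m n v := by
  suffices ∀ N : ℕ, ∀ u v : X → ℕ, (∀ x, v x ≤ N) → (∀ x, u x + v x ≤ n) →
      levelSum m n (u + v) = levelSum m n u + levelSum m n v from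
    this n u v (fun x => by linarith [h x]) h
  intro N
  induction N with
  | zero =>
    intro u v hv _
    obtain rfl : v = 0 := funext fun x => Nat.le_zero.1 (hv x)
    simp [levelSum, hm.empty]
  | succ N ih =>
    intro u v hv huv
    set E := {x | 0 < v x}
    have hv' : v = (fun x => v x - 1) + E.indicator 1 := funext fun x => by
      by_cases hx : 0 < v x <;> simp [E, hx] <;> omega
    rw [hv', ← add_assoc, levelSum_add_indicator hm, ih u _ (fun x => by simp; linarith [hv x]),
      levelSum_add_indicator hm, add_assoc]
    all_goals
      intro x
      have := huv x
      try simp only [E, Set.mem_ofPred_eq, Pi.add_apply]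
      omega

noncomputable def lowerSum (m : Set X → ℝ) (n : ℕ) (f : X → ℝ) : ℝ :=
  levelSum m n (fun x => ⌊n * f x⌋₊) / n

theorem lowerSum_mem_Icc (hm : IsFAPMeasure m) (n : ℕ) (f : X → ℝ) :
    lowerSum m n f ∈ Set.Icc 0 1 :=
  ⟨div_nonneg (sum_nonneg fun _ _ => hm.nonneg _) n.cast_nonneg,
    div_le_one_of_le₀
      (by unfold levelSum; simpa using sum_le_sum fun k (_ : k ∈ range n) => hm.le_one _)
      n.cast_nonneg⟩

theorem lowerSum_comp {Y : Type*} {μ : Set Y → ℝ} (σ : Y → X) (h : ∀ A, μ (σ ⁻¹' A) = m A)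
    (n : ℕ) (f : X → ℝ) : lowerSum μ n (f ∘ σ) = lowerSum m n f := by
  simp only [lowerSum, levelSum]
  congr 1
  exact sum_congr rfl fun k _ => h {x | k < ⌊n * f x⌋₊}

theorem lowerSum_one (hm : IsFAPMeasure m) {n : ℕ} (hn : 0 < n) : lowerSum m n 1 = 1 := by
  have hk : ∀ k ∈ range n, m {x : X | k < ⌊(n : ℝ) * (1 : X → ℝ) x⌋₊} = 1 := fun k hk => by
    simpa [mem_range.1 hk] using hm.1
  rw [lowerSum, levelSum, sum_congr rfl hk]
  simp [hn.ne']

theorem abs_lowerSum_add_sub_le (hm : IsFAPMeasure m) {f g : X → ℝ} (hf : 0 ≤ f) (hg : 0 ≤ g)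
    (hfg : f + g ≤ 1) {n : ℕ} (hn : 0 < n) :
    |lowerSum m n (f + g) - (lowerSum m n f + lowerSum m n g)| ≤ 1 / n := by
  set a : X → ℕ := fun x => ⌊n * f x⌋₊
  set b : X → ℕ := fun x => ⌊n * g x⌋₊
  set c : X → ℕ := fun x => ⌊n * (f + g) x⌋₊
  set E := {x | a x + b x < c x}
  have hab (x : X) : a x + b x ≤ c x := by
    refine Nat.le_floor ?_
    push_cast [Pi.add_apply]
    nlinarith [Nat.floor_le (mul_nonneg n.cast_nonneg (hf x)),
      Nat.floor_le (mul_nonneg n.cast_nonneg (hg x))]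
  have hc_lt (x : X) : c x < a x + b x + 2 := by
    refine (Nat.floor_lt (mul_nonneg n.cast_nonneg (add_nonneg (hf x) (hg x)))).2 ?_
    push_cast [Pi.add_apply]
    nlinarith [Nat.lt_floor_add_one ((n : ℝ) * f x), Nat.lt_floor_add_one ((n : ℝ) * g x)]
  have hc_le (x : X) : c x ≤ n := Nat.floor_le_of_le (by
    have := hfg x
    simp only [Pi.add_apply, Pi.one_apply] at this ⊢
    nlinarith [(n.cast_nonneg : (0 : ℝ) ≤ n)])
  have hc : c = a + b + E.indicator 1 := funext fun x => by
    have := hab x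
    have := hc_lt x
    by_cases hx : x ∈ E <;> simp only [E, Set.mem_ofPred_eq] at hx <;> simp [E, hx] <;> omega
  have hsplit : lowerSum m n (f + g) = lowerSum m n f + lowerSum m n g + m E / n := by
    rw [lowerSum, show (fun x => ⌊n * (f + g) x⌋₊) = c from rfl, hc,
      levelSum_add_indicator hm (w := a + b) (E := E) fun x hx => lt_of_lt_of_le hx (hc_le x),
      levelSum_add hm fun x => (hab x).trans (hc_le x), lowerSum, lowerSum, add_div, add_div]
  rw [hsplit, add_sub_cancel_left, abs_div, abs_of_nonneg (hm.nonneg E), Nat.abs_cast]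
  gcongr
  exact hm.le_one E

/- An ultrafilter limit of the lower sums always exists, as they lie in `[0, 1]`; additivity
then only needs the `1 / n` error of `abs_lowerSum_add_sub_le`, not convergence along `atTop`. -/
noncomputable def faIntegral (m : Set X → ℝ) (f : X → ℝ) : ℝ :=
  limUnder (Ultrafilter.of (atTop : Filter ℕ) : Filter ℕ) fun n => lowerSum m n f

theorem tendsto_lowerSum_faIntegral (hm : IsFAPMeasure m) (f : X → ℝ) :
    Tendsto (fun n => lowerSum m n f) (Ultrafilter.of (atTop : Filter ℕ)) (𝓝 (faIntegral m f)) :=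
  Ultrafilter.tendsto_limUnder_of_eventually_mem_Icc _ (.of_forall fun n => lowerSum_mem_Icc hm n f)

theorem faIntegral_nonneg (hm : IsFAPMeasure m) (f : X → ℝ) : 0 ≤ faIntegral m f :=
  ge_of_tendsto (tendsto_lowerSum_faIntegral hm f) (.of_forall fun n => (lowerSum_mem_Icc hm n f).1)

theorem faIntegral_one (hm : IsFAPMeasure m) : faIntegral m 1 = 1 :=
  (tendsto_const_nhds.congr' (((eventually_gt_atTop 0).filter_mono (Ultrafilter.of_le _)).mono
    fun _ hn => (lowerSum_one hm hn).symm)).limUnder_eq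

theorem faIntegral_add (hm : IsFAPMeasure m) {f g : X → ℝ} (hf : 0 ≤ f) (hg : 0 ≤ g)
    (hfg : f + g ≤ 1) : faIntegral m (f + g) = faIntegral m f + faIntegral m g :=
  eq_of_tendsto_of_abs_sub_le (tendsto_lowerSum_faIntegral hm _)
    ((tendsto_lowerSum_faIntegral hm f).add (tendsto_lowerSum_faIntegral hm g))
    (tendsto_one_div_atTop_nhds_zero_nat.mono_left (Ultrafilter.of_le _))
    (((eventually_gt_atTop 0).filter_mono (Ultrafilter.of_le _)).mono
      fun _ hn => abs_lowerSum_add_sub_le hm hf hg hfg hn)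

theorem faIntegral_comp {Y : Type*} {μ : Set Y → ℝ} (σ : Y → X) (h : ∀ A, μ (σ ⁻¹' A) = m A)
    (f : X → ℝ) : faIntegral μ (f ∘ σ) = faIntegral m f := by
  simp only [faIntegral, lowerSum_comp σ h]

theorem isFAPMeasure_faIntegral {Y : Type*} (hm : IsFAPMeasure m) {K : Set Y → X → ℝ}
    (hK : ∀ x, IsFAPMeasure fun B => K B x) : IsFAPMeasure fun B => faIntegral m (K B) := by
  refine ⟨?_, fun B => faIntegral_nonneg hm _, fun A B h => ?_⟩
  · simpa [show K Set.univ = 1 from funext fun x => (hK x).1] using faIntegral_one hm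
  · have hunion : K (A ∪ B) = K A + K B := funext fun x => (hK x).union h
    simp only [hunion]
    exact faIntegral_add hm (fun x => (hK x).nonneg A) (fun x => (hK x).nonneg B)
      (fun x => hunion ▸ (hK x).le_one (A ∪ B))

end FAIntegral

open MulAction in
theorem measure_preimage_mul_eq_of_smul_eq {G X : Type*} [Group G] [MulAction G X] {y : X}
    {μ : Set (stabilizer G y) → ℝ} (hμ : ∀ (s : stabilizer G y) (A : Set (stabilizer G y)),
      μ ((s * ·) '' A) = μ A) {t t' : G} (h : t • y = t' • y) (B : Set G) :
    μ ((fun s : stabilizer G y => t * s) ⁻¹' B) =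
      μ ((fun s : stabilizer G y => t' * s) ⁻¹' B) := by
  have hs : t'⁻¹ * t ∈ stabilizer G y := by rw [mem_stabilizer_iff, mul_smul, h, inv_smul_smul]
  rw [← hμ ⟨_, hs⟩, Set.image_mul_left, Set.preimage_preimage]
  congr 1
  ext s
  simp [mul_assoc]

open MulAction in
theorem amenableGroup_of_amenable_stabilizers {G X : Type*} [Group G] [MulAction G X]
    (m : Set X → ℝ) (hm : IsFAPMeasure m) (hinv : ∀ (g : G) (A : Set X), m ((g • ·) '' A) = m A)
    (hstab : ∀ x : X, AmenableGroup (stabilizer G x)) : AmenableGroup G := by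
  let orb : X → orbitRel.Quotient G X := Quotient.mk _
  have htransport (x : X) : ∃ t : G, t • (orb x).out = x := by
    obtain ⟨g, hg⟩ := Quotient.mk_out (s := orbitRel G X) x
    exact ⟨g⁻¹, by rw [← hg, inv_smul_smul]⟩
  choose t ht using htransport
  choose μ hμ hμinv using fun q : orbitRel.Quotient G X => hstab q.out
  let K (B : Set G) (x : X) : ℝ := μ (orb x) ((fun s => t x * s) ⁻¹' B)
  have hequiv (g : G) (B : Set G) (x : X) : K ((g * ·) '' B) (g • x) = K B x := by
    have horb : orb (g • x) = orb x := Quotient.sound ⟨g, rfl⟩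
    have hgx := ht (g • x)
    simp only [K]
    rw [horb] at hgx ⊢
    rw [Set.image_mul_left, Set.preimage_preimage]
    simp only [← mul_assoc]
    exact measure_preimage_mul_eq_of_smul_eq (hμinv _) (by rw [mul_smul, hgx, inv_smul_smul, ht]) B
  refine ⟨fun B => faIntegral m (K B), isFAPMeasure_faIntegral hm fun x => (hμ _).map _,
    fun g B => ?_⟩
  have hK : K ((g * ·) '' B) = K B ∘ (g⁻¹ • ·) := funext fun x => by
    simpa using hequiv g B (g⁻¹ • x)
  show faIntegral m _ = _
  rw [hK]
  exact faIntegral_comp _ (fun A => by rw [Set.preimage_smul_inv, ← Set.image_smul, hinv]) _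

abbrev conjNonIdMulAction (G : Type*) [Group G] : MulAction G {h : G // h ≠ 1} where
  smul := conjNonId
  one_smul x := Subtype.ext (show 1 * x.1 * 1⁻¹ = x.1 by group)
  mul_smul a b x :=
    Subtype.ext (show a * b * x.1 * (a * b)⁻¹ = a * (b * x.1 * b⁻¹) * a⁻¹ by group)

attribute [local instance] conjNonIdMulAction

theorem stabilizer_le_centralizer {G : Type*} [Group G] (x : {h : G // h ≠ 1}) :
    MulAction.stabilizer G x ≤ Subgroup.centralizer {(x : G)} := fun g hg => by
  have hconj : g * x * g⁻¹ = x := congrArg Subtype.val (MulAction.mem_stabilizer_iff.1 hg)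
  exact Subgroup.mem_centralizer_singleton_iff.2 (mul_inv_eq_iff_eq_mul.1 hconj)

/-- Every inner amenable commutative transitive group is amenable. -/
theorem amenable_of_innerAmenable_of_CT
    (G : Type*) [Group G] (hIA : InnerAmenable G)
    (hCT : ∀ g : G, g ≠ 1 → ∀ a ∈ Subgroup.centralizer {g}, ∀ b ∈ Subgroup.centralizer {g},
      a * b = b * a) :
    AmenableGroup G := by
  obtain ⟨m, hm, hinv⟩ := hIA
  refine amenableGroup_of_amenable_stabilizers m hm hinv fun x => ?_
  let : CommGroup (MulAction.stabilizer G x) :=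
    { (inferInstance : Group (MulAction.stabilizer G x)) with
      mul_comm := fun a b => Subtype.ext <| hCT x x.2 a (stabilizer_le_centralizer x a.2) b
        (stabilizer_le_centralizer x b.2) }
  exact CommGroup.amenableGroup _
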